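/- Let T be a canonical earliest deterministic total top-down tree transducer with axiom A. If T is equivalent to a homomorphism h, then for every a ∈ Σ of rank k, the tree T(a(x₁,...,x_k)) is subtree conform to A. -/

import Mathlib

namespace TreeTrans

/-- Finite trees with nodes labeled by `α`. -/
inductive Tree (α : Type) : Type
  | node : α → List (Tree α) → Tree α

namespace Tree

variable {α β γ δ : Type}

def label : Tree α → α | node a _ => a
def children : Tree α → List (Tree α) | node _ ts => ts

/-- The height of a tree (a leaf has height 1). -/
def height : Tree α → ℕ
  | node _ ts => (ts.attach.map fun c => height c.1).foldr max 0 + 1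
decreasing_by
  have := List.sizeOf_lt_of_mem c.2
  simp only [Tree.node.sizeOf_spec]; omega

def mapLabel (f : α → β) : Tree α → Tree β
  | node a ts => node (f a) (ts.attach.map fun c => mapLabel f c.1)
decreasing_by
  have := List.sizeOf_lt_of_mem c.2
  simp only [Tree.node.sizeOf_spec]; omega

/-- The subtree rooted at a node (a node is a list of child indices). -/
def subtreeAt : Tree α → List ℕ → Option (Tree α)
  | t, [] => some t
  | node _ ts, i :: p =>
    match ts[i]? with
    | some c => subtreeAt c p
    | none => none

/-- The set `V(t)` of nodes of a tree. -/
def pos (t : Tree α) : Set (List ℕ) := {p | (t.subtreeAt p).isSome}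

/-- The label `t[v]` of a node (if the node exists). -/
def labelAt (t : Tree α) (p : List ℕ) : Option α := (t.subtreeAt p).map label

/-- The list of variable leaves (in left-to-right order) of a tree over `α ⊕ β`,
where `β` plays the role of the variables. -/
def varList : Tree (α ⊕ β) → List β
  | node (.inl _) ts => (ts.attach.map fun c => varList c.1).flatten
  | node (.inr x) _ => [x]
decreasing_by
  have := List.sizeOf_lt_of_mem c.2
  simp only [Tree.node.sizeOf_spec]; omega

/-- Substitution of the variables of a tree. -/
def substGen (f : γ → Tree (α ⊕ β)) : Tree (α ⊕ γ) → Tree (α ⊕ β)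
  | node (.inl a) ts => node (.inl a) (ts.attach.map fun c => substGen f c.1)
  | node (.inr x) _ => f x
decreasing_by
  have := List.sizeOf_lt_of_mem c.2
  simp only [Tree.node.sizeOf_spec]; omega

/-- View a tree over `α ⊕ β` as a tree over `α`; fails if a variable occurs. -/
def toDelta : Tree (α ⊕ β) → Option (Tree α)
  | node (.inl d) ts => ((ts.attach.map fun c => toDelta c.1).mapM id).map (node d)
  | node (.inr _) _ => none
decreasing_by
  have := List.sizeOf_lt_of_mem c.2
  simp only [Tree.node.sizeOf_spec]; omega

open Classical in
/-- The maximal common prefix pattern `t₁ ⊔ t₂` of two trees; positions where the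
trees differ are replaced by a variable (labeled `none`). -/
noncomputable def lcp : Tree α → Tree α → Tree (Option α)
  | node a ts, node b us =>
    if a = b ∧ ts.length = us.length then
      node (some a) ((ts.zip us).attach.map fun c => lcp c.1.1 c.1.2)
    else node none []
termination_by t _ => sizeOf t
decreasing_by
  obtain ⟨⟨x, y⟩, hm⟩ := c
  have := List.sizeOf_lt_of_mem (List.of_mem_zip hm).1
  simp only [Tree.node.sizeOf_spec]; omega

end Tree

open Tree

/-- A tree is well-formed w.r.t. a rank function if every node labeled `a`
has exactly `rank a` children. -/
def WF (rank : α → ℕ) (t : Tree α) : Prop :=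
  ∀ p u, t.subtreeAt p = some u → u.children.length = rank u.label

/-- Rank function on labels including variables (variables have rank 0). -/
def rankV (rank : α → ℕ) : α ⊕ β → ℕ := Sum.elim rank fun _ => 0

/-- All variable indices occurring in the tree are `< k`. -/
def VarsLt (k : ℕ) (t : Tree (α ⊕ β × ℕ)) : Prop := ∀ x ∈ varList t, x.2 < k

/-- Ground trees: no variables occur. -/
def GroundT (t : Tree (α ⊕ β)) : Prop := varList t = []

/-- Embedding of pure trees into trees possibly containing variables. -/
def embed : Tree α → Tree (α ⊕ β) := mapLabel Sum.inl

/-- The input tree `x₁`. -/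
def xvar {α : Type} : Tree (α ⊕ ℕ) := .node (.inr 0) []

/-- A context: a well-formed input tree containing exactly one variable,
namely `x₁` (index `0`). -/
def IsContext (rank : α → ℕ) (c : Tree (α ⊕ ℕ)) : Prop :=
  WF (rankV rank) c ∧ varList c = [0]

/-- A member of `T_Σ{X_k}`: each of the variables `x₁,…,x_k` occurs exactly once
and in left-to-right order. -/
def IsPattern (rank : α → ℕ) (k : ℕ) (s : Tree (α ⊕ ℕ)) : Prop :=
  WF (rankV rank) s ∧ varList s = List.range k

/-- `c·s`, plugging `s` into the unique variable of the context `c`. -/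
def plug (c : Tree (α ⊕ ℕ)) (s : Tree (α ⊕ β)) : Tree (α ⊕ β) :=
  substGen (fun _ => s) c

/-- A node labeled `b` (a "state-variable" leaf) occurs in `t`. -/
def OccursIn (t : Tree (α ⊕ β)) (b : β) : Prop := ∃ p, t.labelAt p = some (.inr b)

/-- `v` is the lowest common ancestor (longest common prefix) of the set `S` of nodes. -/
def IsLcaOf (S : Set (List ℕ)) (v : List ℕ) : Prop :=
  (∀ p ∈ S, v <+: p) ∧ ∀ w, (∀ p ∈ S, w <+: p) → w <+: v

/-- The set of nodes of `t` labeled `q(x_i)` for some state `q`. -/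
def varPos (t : Tree (α ⊕ β × γ)) (i : γ) : Set (List ℕ) :=
  {p | ∃ q : β, t.labelAt p = some (.inr (q, i))}

/-- An output tree is lca-conform if below the lowest common ancestor `ν(x_i)` of
the leaves labeled `q(x_i)` no leaf labeled `q(x_j)` with `j ≠ i` occurs. -/
def LcaConformTree (t : Tree (α ⊕ β × γ)) : Prop :=
  ∀ i v, IsLcaOf (varPos t i) v → ∀ u, t.subtreeAt v = some u →
    ∀ p q j, j ≠ i → u.labelAt p ≠ some (.inr (q, j))

/-- `t₁ ≃ t₂`: equality up to a bijective renaming of the variables. -/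
def Simeq (t₁ t₂ : Tree (α ⊕ β × ℕ)) : Prop :=
  ∃ f : ℕ → ℕ,
    Set.BijOn f {x | x ∈ (varList t₁).map Prod.snd} {x | x ∈ (varList t₂).map Prod.snd} ∧
    t₂ = mapLabel (Sum.map id (Prod.map id f)) t₁

/-- `t` is subtree conform to `t'`. -/
inductive SubtreeConform (t' : Tree (α ⊕ β × ℕ)) : Tree (α ⊕ β × ℕ) → Prop
  | ground (t) : GroundT t → SubtreeConform t' t
  | simeq (t) : Simeq t t' → SubtreeConform t' t
  | comp (d : α) (ts : List (Tree (α ⊕ β × ℕ))) :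
      (∀ c ∈ ts, SubtreeConform t' c) → SubtreeConform t' (.node (.inl d) ts)

/-- Second-order substitution: replace every leaf labeled `(q, i)` by `f q i`. -/
def applyRhs {Q Δ β : Type} (f : Q → ℕ → Tree (Δ ⊕ β)) :
    Tree (Δ ⊕ Q × ℕ) → Tree (Δ ⊕ β)
  | .node (.inl d) ts => .node (.inl d) (ts.attach.map fun c => applyRhs f c.1)
  | .node (.inr (q, i)) _ => f q i
decreasing_by
  have := List.sizeOf_lt_of_mem c.2
  simp only [Tree.node.sizeOf_spec]; omega

/-- Partial second-order substitution. -/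
def applyRhsO {Q Δ β : Type} (f : Q → ℕ → Option (Tree (Δ ⊕ β))) :
    Tree (Δ ⊕ Q × ℕ) → Option (Tree (Δ ⊕ β))
  | .node (.inl d) ts =>
      ((ts.attach.map fun c => applyRhsO f c.1).mapM id).map (.node (.inl d))
  | .node (.inr (q, i)) _ => f q i
decreasing_by
  have := List.sizeOf_lt_of_mem c.2
  simp only [Tree.node.sizeOf_spec]; omega

/-- A deterministic total top-down tree transducer. -/
structure TDTT (Q Sig Δ : Type) (rankS : Sig → ℕ) (rankD : Δ → ℕ) : Type where
  /-- the right-hand side `rhs_T(q,a) ∈ T_Δ[Q(X_k)]` of the rule for `(q,a)` -/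
  rhs : Q → Sig → Tree (Δ ⊕ Q × ℕ)
  /-- the axiom `A ∈ T_Δ[Q(X₁)]` -/
  axm : Tree (Δ ⊕ Q × ℕ)
  rhs_wf : ∀ q a, WF (rankV rankD) (rhs q a) ∧ VarsLt (rankS a) (rhs q a)
  axm_wf : WF (rankV rankD) axm ∧ VarsLt 1 axm

namespace TDTT

variable {Q Q' Sig Δ : Type} {rankS : Sig → ℕ} {rankD : Δ → ℕ}

/-- The semantics `[[q]] : T_Σ[X] → T_Δ[Q(X)]`. -/
def semState (T : TDTT Q Sig Δ rankS rankD) : Q → Tree (Sig ⊕ ℕ) → Tree (Δ ⊕ Q × ℕ)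
  | q, .node (.inl a) ss =>
      applyRhs (fun q' i =>
        match h : ss[i]? with
        | some s => T.semState q' s
        | none => .node (.inr (q', i)) []) (T.rhs q a)
  | q, .node (.inr x) _ => .node (.inr (q, x)) []
decreasing_by
  have hm : s ∈ ss := by
    first
      | exact List.mem_of_getElem? h
      | exact (List.getElem?_eq_some_iff.1 h).elim fun hi e => e ▸ List.getElem_mem hi
  have := List.sizeOf_lt_of_mem hm
  simp only [Tree.node.sizeOf_spec]; omega

/-- The translation `T(s) = A[q(x₁) ← [[q]](s)]`. -/
def run (T : TDTT Q Sig Δ rankS rankD) (s : Tree (Sig ⊕ ℕ)) : Tree (Δ ⊕ Q × ℕ) :=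
  applyRhs (fun q _ => T.semState q s) T.axm

/-- Equivalence of two transducers: equality on all ground input trees. -/
def Equiv (T : TDTT Q Sig Δ rankS rankD) (T' : TDTT Q' Sig Δ rankS rankD) : Prop :=
  ∀ s : Tree Sig, WF rankS s → toDelta (T.run (embed s)) = toDelta (T'.run (embed s))

/-- `T` is earliest: for each state, `⊔ {[[q]](s) | s ∈ T_Σ} = x₁`, i.e. there are two
ground input trees on which `[[q]]` produces different root symbols. -/
def Earliest (T : TDTT Q Sig Δ rankS rankD) : Prop :=
  ∀ q : Q, ∃ s₁ s₂ : Tree Sig, WF rankS s₁ ∧ WF rankS s₂ ∧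
    (T.semState q (embed s₁)).label ≠ (T.semState q (embed s₂)).label

/-- Distinct states realize distinct functions on ground trees. -/
def Canonical (T : TDTT Q Sig Δ rankS rankD) : Prop :=
  ∀ q₁ q₂ : Q, q₁ ≠ q₂ → ∃ s : Tree Sig, WF rankS s ∧
    T.semState q₁ (embed s) ≠ T.semState q₂ (embed s)

def CanonicalEarliest (T : TDTT Q Sig Δ rankS rankD) : Prop :=
  T.Earliest ∧ T.Canonical

/-- Linearity: every variable occurs at most once in the axiom and each right-hand side. -/
def Linear (T : TDTT Q Sig Δ rankS rankD) : Prop :=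
  ((varList T.axm).map Prod.snd).Nodup ∧
  ∀ q a, ((varList (T.rhs q a)).map Prod.snd).Nodup

/-- States `q₁` and `q₂` occur pairwise in `T`. -/
def PairwiseOccur (T : TDTT Q Sig Δ rankS rankD) (q₁ q₂ : Q) : Prop :=
  ∃ c, IsContext rankS c ∧ ∃ p₁ p₂, p₁ ≠ p₂ ∧
    (T.run c).labelAt p₁ = some (.inr (q₁, 0)) ∧
    (T.run c).labelAt p₂ = some (.inr (q₂, 0))

/-- `(q₁,q₂) ⊢^c (q₁',q₂')`. -/
def Step (T : TDTT Q Sig Δ rankS rankD) (q₁ q₂ : Q) (c : Tree (Sig ⊕ ℕ))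
    (q₁' q₂' : Q) : Prop :=
  OccursIn (T.semState q₁ c) (q₁', 0) ∧ OccursIn (T.semState q₂ c) (q₂', 0) ∧
  (T.semState q₁ c ≠ .node (.inr (q₁', 0)) [] ∨ T.semState q₂ c ≠ .node (.inr (q₂', 0)) [])

/-- `T` is zero output twinned. -/
def ZeroOutputTwinned (T : TDTT Q Sig Δ rankS rankD) : Prop :=
  ¬ ∃ q₁ q₂ c, T.PairwiseOccur q₁ q₂ ∧ IsContext rankS c ∧ c ≠ xvar ∧
      T.Step q₁ q₂ c q₁ q₂

/-- `T` is lca-conform. -/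
def LcaConform (T : TDTT Q Sig Δ rankS rankD) : Prop :=
  ∀ k (s : Tree (Sig ⊕ ℕ)), IsPattern rankS k s → LcaConformTree (T.run s)

/-- A homomorphism: a single-state transducer with axiom `q(x₁)`. -/
def IsHom (h : TDTT Unit Sig Δ rankS rankD) : Prop :=
  h.axm = .node (.inr ((), 0)) []

end TDTT

/-- The input tree `a(x₁,…,x_k)` where `k = rank a`. -/
def inputAtom (rankS : Sig → ℕ) (a : Sig) : Tree (Sig ⊕ ℕ) :=
  .node (.inl a) ((List.range (rankS a)).map fun i => .node (.inr i) [])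

/-- A deterministic (partial) top-down tree transducer with regular look-ahead. -/
structure LATT (Q Sig Δ L : Type) (rankS : Sig → ℕ) (rankD : Δ → ℕ) : Type where
  /-- the (possibly partial) transition function of the la-automaton -/
  delta : Sig → List L → Option L
  /-- the axiom `A(l) ∈ T_Δ[Q(X₁)]`, assigned exactly to the accepting la-states -/
  axm : L → Option (Tree (Δ ⊕ Q × ℕ))
  /-- the right-hand side of the rule for `(q, a, l₁,…,l_k)` (at most one rule) -/
  rhs : Q → Sig → List L → Option (Tree (Δ ⊕ Q × ℕ))
  axm_wf : ∀ l t, axm l = some t → WF (rankV rankD) t ∧ VarsLt 1 t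
  rhs_wf : ∀ q a ls t, rhs q a ls = some t →
    WF (rankV rankD) t ∧ VarsLt (rankS a) t ∧ ls.length = rankS a

namespace LATT

variable {Q Q' Sig Δ L L' : Type} {rankS : Sig → ℕ} {rankD : Δ → ℕ}

/-- The set `F` of accepting la-states. -/
def F (M : LATT Q Sig Δ L rankS rankD) : Set L := {l | (M.axm l).isSome}

/-- The extension `δ*` of the transition function to trees in `T_Σ[L]`. -/
def deltaStar (M : LATT Q Sig Δ L rankS rankD) : Tree (Sig ⊕ L) → Option L
  | .node (.inl a) ss =>
      ((ss.attach.map fun c => M.deltaStar c.1).mapM id).bind (M.delta a)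
  | .node (.inr l) _ => some l
decreasing_by
  have := List.sizeOf_lt_of_mem c.2
  simp only [Tree.node.sizeOf_spec]; omega

mutual
/-- `[[q]]_u(s)`: the semantics of state `q` at input node `u`. -/
def lsem (M : LATT Q Sig Δ L rankS rankD) (q : Q) (u : List ℕ) :
    Tree (Sig ⊕ L) → Option (Tree (Δ ⊕ Q × List ℕ))
  | .node (.inr _) _ => some (.node (.inr (q, u)) [])
  | .node (.inl a) ss =>
      match (ss.map fun s => M.deltaStar s).mapM id with
      | none => none
      | some ls =>
        match M.rhs q a ls with
        | none => none
        | some r =>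
          applyRhsO (fun q' i => (M.lsemList u 0 ss).getD i (fun _ => none) <| q') r
termination_by t => sizeOf t
decreasing_by
  simp only [Tree.node.sizeOf_spec]; omega
def lsemList (M : LATT Q Sig Δ L rankS rankD) (u : List ℕ) (i : ℕ) :
    List (Tree (Sig ⊕ L)) → List (Q → Option (Tree (Δ ⊕ Q × List ℕ)))
  | [] => []
  | s :: ss => (fun q' => M.lsem q' (u ++ [i]) s) :: M.lsemList u (i + 1) ss
termination_by l => sizeOf l
decreasing_by
  all_goals (simp only [List.cons.sizeOf_spec]; omega)
end

/-- The translation `M(s)` for `s ∈ T_Σ[L]` (defined iff `δ*(s) ∈ F` and all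
needed rules exist). -/
def lrun (M : LATT Q Sig Δ L rankS rankD) (s : Tree (Sig ⊕ L)) :
    Option (Tree (Δ ⊕ Q × List ℕ)) :=
  (M.deltaStar s).bind fun l => (M.axm l).bind fun ax =>
    applyRhsO (fun q _ => M.lsem q [] s) ax

/-- Equivalence of two la-transducers: the same partial function on ground trees. -/
def EquivL (M : LATT Q Sig Δ L rankS rankD) (N : LATT Q' Sig Δ L' rankS rankD) : Prop :=
  ∀ s : Tree Sig, WF rankS s →
    (M.lrun (embed s)).bind toDelta = (N.lrun (embed s)).bind toDelta

/-- Equivalence of an la-transducer and a total transducer without look-ahead. -/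
def EquivT (M : LATT Q Sig Δ L rankS rankD) (T : TDTT Q' Sig Δ rankS rankD) : Prop :=
  ∀ s : Tree Sig, WF rankS s →
    (M.lrun (embed s)).bind toDelta = toDelta (T.run (embed s))

/-- `M` is total. -/
def Total (M : LATT Q Sig Δ L rankS rankD) : Prop :=
  ∀ s : Tree Sig, WF rankS s → (M.lrun (embed s)).isSome

/-- `M` is la-uniform with la-map `ρ`. -/
def LaUniformWith (M : LATT Q Sig Δ L rankS rankD) (ρ : Q → L) : Prop :=
  (∀ l t, M.axm l = some t → ∀ q i, OccursIn t (q, i) → ρ q = l) ∧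
  (∀ q a ls, ls.length = rankS a → ((M.rhs q a ls).isSome ↔ M.delta a ls = some (ρ q))) ∧
  (∀ q a ls t, M.rhs q a ls = some t → ∀ q' i, OccursIn t (q', i) → ls[i]? = some (ρ q'))

/-- `M` is la-uniform. -/
def LaUniform (M : LATT Q Sig Δ L rankS rankD) : Prop := ∃ ρ, M.LaUniformWith ρ

/-- `M` (la-uniform via `ρ`) is earliest. -/
def EarliestWith (M : LATT Q Sig Δ L rankS rankD) (ρ : Q → L) : Prop :=
  ∀ q : Q, ∃ (s₁ s₂ : Tree Sig) (t₁ t₂ : Tree (Δ ⊕ Q × List ℕ)),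
    WF rankS s₁ ∧ WF rankS s₂ ∧
    M.deltaStar (embed s₁) = some (ρ q) ∧ M.deltaStar (embed s₂) = some (ρ q) ∧
    M.lsem q [] (embed s₁) = some t₁ ∧ M.lsem q [] (embed s₂) = some t₂ ∧
    t₁.label ≠ t₂.label

/-- Distinct states with the same look-ahead realize distinct functions. -/
def CanonWith (M : LATT Q Sig Δ L rankS rankD) (ρ : Q → L) : Prop :=
  ∀ q₁ q₂ : Q, q₁ ≠ q₂ → ρ q₁ = ρ q₂ → ∃ s : Tree Sig, WF rankS s ∧
    M.deltaStar (embed s) = some (ρ q₁) ∧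
    M.lsem q₁ [] (embed s) ≠ M.lsem q₂ [] (embed s)

/-- `M` is canonical earliest. -/
def CanonicalEarliest (M : LATT Q Sig Δ L rankS rankD) : Prop :=
  ∃ ρ, M.LaUniformWith ρ ∧ M.EarliestWith ρ ∧ M.CanonWith ρ

/-- Linearity of an la-transducer. -/
def Linear (M : LATT Q Sig Δ L rankS rankD) : Prop :=
  (∀ l t, M.axm l = some t → ((varList t).map Prod.snd).Nodup) ∧
  (∀ q a ls t, M.rhs q a ls = some t → ((varList t).map Prod.snd).Nodup)

/-- A trivial look-ahead automaton: the la-transducer is in effect a transducer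
without look-ahead. -/
def TrivialLA (M : LATT Q Sig Δ Unit rankS rankD) : Prop :=
  (∀ a ls, M.delta a ls = some ()) ∧ (M.axm ()).isSome

/-- A (possibly partial) homomorphism presented as a transducer without look-ahead:
single state, trivial look-ahead and axiom `q(x₁)`. -/
def IsHomLA (M : LATT Unit Sig Δ Unit rankS rankD) : Prop :=
  (∀ a ls, M.delta a ls = some ()) ∧ M.axm () = some (.node (.inr ((), 0)) [])

/-- `M` is lca-conform. -/
def LcaConform (M : LATT Q Sig Δ L rankS rankD) : Prop :=
  ∀ s : Tree (Sig ⊕ L), WF (rankV rankS) s →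
    ∀ t, M.lrun s = some t → LcaConformTree t

/-- `n` is a difference bound of `M`: an upper bound on the heights of all
difference trees of `M`. -/
def DifferenceBound (M : LATT Q Sig Δ L rankS rankD) (n : ℕ) : Prop :=
  ∀ (c : Tree (Sig ⊕ ℕ)) (l₁ l₂ : L) t₁ t₂, IsContext rankS c →
    M.lrun (plug c (.node (.inr l₁) [])) = some t₁ →
    M.lrun (plug c (.node (.inr l₂) [])) = some t₂ →
    ∀ v, (Tree.lcp t₁ t₂).labelAt v = some none →
      ∀ u₁ u₂, t₁.subtreeAt v = some u₁ → t₂.subtreeAt v = some u₂ →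
        u₁.height ≤ n ∧ u₂.height ≤ n

end LATT

mutual
/-- `graft tM tN p`: replace in `tN` (located at position `p` of the full tree) every
node not labeled by an output symbol by the subtree of `tM` at the same position. -/
def graft {Δ β β' : Type} (tM : Tree (Δ ⊕ β)) : Tree (Δ ⊕ β') → List ℕ → Tree (Δ ⊕ β)
  | .node (.inl d) ts, p => .node (.inl d) (graftList tM p 0 ts)
  | .node (.inr _) _, p => (tM.subtreeAt p).getD tM
termination_by t _ => sizeOf t
decreasing_by
  simp only [Tree.node.sizeOf_spec]; omega
def graftList {Δ β β' : Type} (tM : Tree (Δ ⊕ β)) (p : List ℕ) (i : ℕ) :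
    List (Tree (Δ ⊕ β')) → List (Tree (Δ ⊕ β))
  | [] => []
  | t :: ts => graft tM t (p ++ [i]) :: graftList tM p (i + 1) ts
termination_by l => sizeOf l
decreasing_by
  all_goals (simp only [List.cons.sizeOf_spec]; omega)
end

/-- A tree uses only symbols from `P`. -/
def UsesOnly {Sig : Type} (P : Set Sig) (s : Tree Sig) : Prop :=
  ∀ p u, s.subtreeAt p = some u → u.label ∈ P

/-!
Let `D = T(a(x₁,…,x_k))` and `R = h(a(x₁,…,x_k))`. Equivalence with the homomorphism `h` gives,
for all ground inputs `σ`, `D[q(xᵢ) ← [[q]](σᵢ)] = R[xᵢ ← T(σᵢ)] = R[xᵢ ← A[q(x₁) ← [[q]](σᵢ)]]`.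
Descend through `R` and `D` simultaneously. Where `R` has an output symbol, so does `D`, since by
earliestness no `[[q]](σᵢ)` has a constant root symbol. Where `R` has a variable `xᵢ`, the subtree
`E` of `D` satisfies `E[q(xⱼ) ← [[q]](σⱼ)] = A[q(x₁) ← [[q]](σᵢ)]` for all `σ`. Again by
earliestness `E` and `A` have the same output symbols, and where both have state calls,
earliestness forces the same input variable and canonicity the same state. Hence `E` is `A` with
`x₁` renamed to `xᵢ`, so `E ≃ A`.
-/

section Trees

variable {α β γ : Type}

namespace Tree

@[induction_eliminator]
theorem induction {motive : Tree α → Prop}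
    (node : ∀ a ts, (∀ t ∈ ts, motive t) → motive (.node a ts)) (t : Tree α) : motive t :=
  match t with
  | .node a ts => node a ts fun t _ => induction node t
termination_by sizeOf t
decreasing_by
  have := List.sizeOf_lt_of_mem ‹t ∈ ts›
  simp only [Tree.node.sizeOf_spec]; omega

@[simp] theorem label_node (a : α) (ts : List (Tree α)) : (node a ts).label = a := rfl

@[simp] theorem mapLabel_node (f : α → β) (a : α) (ts : List (Tree α)) :
    mapLabel f (node a ts) = node (f a) (ts.map (mapLabel f)) := by
  rw [mapLabel, List.attach_map_val]

theorem mapLabel_mapLabel (f : β → γ) (g : α → β) (t : Tree α) :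
    mapLabel f (mapLabel g t) = mapLabel (f ∘ g) t := by
  induction t with
  | node a ts ih =>
    simp only [mapLabel_node, List.map_map]
    exact congrArg _ (List.map_congr_left fun c hc => ih c hc)

@[simp] theorem varList_node_inl (a : α) (ts : List (Tree (α ⊕ β))) :
    varList (node (.inl a) ts) = (ts.map varList).flatten := by
  rw [varList, List.attach_map_val]

@[simp] theorem varList_node_inr (x : β) (ts : List (Tree (α ⊕ β))) :
    varList (node (.inr x) ts) = [x] := by
  rw [varList]

theorem varList_mapLabel {α' β' : Type} (f : α → α') (g : β → β') (t : Tree (α ⊕ β)) :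
    varList (mapLabel (Sum.map f g) t) = (varList t).map g := by
  induction t with
  | node a ts ih =>
    cases a with
    | inl d =>
      simp only [mapLabel_node, Sum.map_inl, varList_node_inl, List.map_map, List.map_flatten]
      exact congrArg _ (List.map_congr_left fun c hc => ih c hc)
    | inr x => simp

@[simp] theorem toDelta_node_inl (a : α) (ts : List (Tree (α ⊕ β))) :
    toDelta (node (.inl a) ts) = ((ts.map toDelta).mapM id).map (node a) := by
  rw [toDelta, List.attach_map_val]

theorem subtreeAt_nil (t : Tree α) : t.subtreeAt [] = some t := by
  cases t; rw [subtreeAt]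

theorem subtreeAt_cons (a : α) (ts : List (Tree α)) (i : ℕ) (p : List ℕ) :
    (node a ts).subtreeAt (i :: p) = ts[i]?.bind (subtreeAt · p) := by
  rw [subtreeAt]; cases ts[i]? <;> rfl

end Tree

theorem embed_node (a : α) (ts : List (Tree α)) :
    (embed (.node a ts) : Tree (α ⊕ β)) = .node (.inl a) (ts.map embed) :=
  mapLabel_node _ _ _

theorem toDelta_embed (u : Tree α) : toDelta (embed u : Tree (α ⊕ β)) = some u := by
  induction u with
  | node a ts ih =>
    have hts : ts.map (toDelta ∘ (embed : Tree α → Tree (α ⊕ β))) = ts.map some :=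
      List.map_congr_left ih
    have hmapM : ∀ l : List (Tree α), (l.map some).mapM id = some l := by
      intro l; induction l <;> simp_all
    simp [embed_node, List.map_map, hts, hmapM]

theorem GroundT.exists_eq_embed {t : Tree (α ⊕ β)} (ht : GroundT t) : ∃ u, t = embed u := by
  induction t with
  | node a ts ih =>
    cases a with
    | inl d =>
      simp only [GroundT, varList_node_inl] at ht
      have hts : ∀ c ∈ ts, ∃ u, embed u = c := fun c hc =>
        (ih c hc (List.flatten_eq_nil_iff.mp ht _ (List.mem_map_of_mem hc))).imp fun _ => Eq.symm
      have : Nonempty (Tree α) := ⟨.node d []⟩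
      choose! u hu using hts
      have hts : ts.map (embed ∘ u) = ts := (List.map_congr_left hu).trans (List.map_id ts)
      exact ⟨.node d (ts.map u), by rw [embed_node, List.map_map, hts]⟩
    | inr x => simp [GroundT] at ht

theorem GroundT.eq_of_toDelta_eq {t₁ t₂ : Tree (α ⊕ β)} (h₁ : GroundT t₁) (h₂ : GroundT t₂)
    (h : toDelta t₁ = toDelta t₂) : t₁ = t₂ := by
  obtain ⟨u₁, rfl⟩ := h₁.exists_eq_embed
  obtain ⟨u₂, rfl⟩ := h₂.exists_eq_embed
  rw [toDelta_embed, toDelta_embed, Option.some_inj] at h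
  rw [h]

theorem WF_node_iff {rank : α → ℕ} {a : α} {ts : List (Tree α)} :
    WF rank (.node a ts) ↔ ts.length = rank a ∧ ∀ t ∈ ts, WF rank t := by
  constructor
  · intro h
    refine ⟨by simpa [Tree.children] using h [] _ (subtreeAt_nil _), fun t ht p u hu => ?_⟩
    obtain ⟨i, hi, rfl⟩ := List.getElem_of_mem ht
    exact h (i :: p) u (by rwa [subtreeAt_cons, List.getElem?_eq_getElem hi])
  · rintro ⟨hlen, hts⟩ (_ | ⟨i, p⟩) u hu
    · rw [subtreeAt_nil, Option.some_inj] at hu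
      subst hu
      simpa [Tree.children] using hlen
    · rw [subtreeAt_cons] at hu
      obtain ⟨c, hc, hu⟩ := Option.bind_eq_some_iff.mp hu
      exact hts c (List.mem_of_getElem? hc) p u hu

end Trees

section Substitution

variable {α β γ Q Q' : Type}

@[simp] theorem applyRhs_node_inl (f : Q → ℕ → Tree (α ⊕ β)) (d : α) (ts) :
    applyRhs f (.node (.inl d) ts) = .node (.inl d) (ts.map (applyRhs f)) := by
  rw [applyRhs, List.attach_map_val]

@[simp] theorem applyRhs_node_inr (f : Q → ℕ → Tree (α ⊕ β)) (q : Q) (i : ℕ) (ts) :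
    applyRhs f (.node (.inr (q, i)) ts) = f q i := by
  rw [applyRhs]

theorem applyRhs_applyRhs (f : Q' → ℕ → Tree (α ⊕ β)) (g : Q → ℕ → Tree (α ⊕ Q' × ℕ))
    (t : Tree (α ⊕ Q × ℕ)) :
    applyRhs f (applyRhs g t) = applyRhs (fun q i => applyRhs f (g q i)) t := by
  induction t with
  | node a ts ih =>
    rcases a with d | ⟨q, i⟩
    · simp only [applyRhs_node_inl, List.map_map]
      exact congrArg _ (List.map_congr_left ih)
    · simp

theorem applyRhs_congr {f g : Q → ℕ → Tree (α ⊕ β)} {t : Tree (α ⊕ Q × ℕ)}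
    (hfg : ∀ q i, (q, i) ∈ varList t → f q i = g q i) : applyRhs f t = applyRhs g t := by
  induction t with
  | node a ts ih =>
    rcases a with d | ⟨q, i⟩
    · simp only [applyRhs_node_inl]
      refine congrArg _ (List.map_congr_left fun c hc => ih c hc fun q i hqi => hfg q i ?_)
      simpa using ⟨c, hc, hqi⟩
    · simpa using hfg q i

theorem groundT_applyRhs {f : Q → ℕ → Tree (α ⊕ β)} {t : Tree (α ⊕ Q × ℕ)}
    (hf : ∀ q i, (q, i) ∈ varList t → GroundT (f q i)) : GroundT (applyRhs f t) := by
  induction t with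
  | node a ts ih =>
    rcases a with d | ⟨q, i⟩
    · simp only [GroundT, applyRhs_node_inl, varList_node_inl, List.map_map,
        List.flatten_eq_nil_iff, List.mem_map, Function.comp_apply]
      rintro _ ⟨c, hc, rfl⟩
      exact ih c hc fun q i hqi => hf q i (by simpa using ⟨c, hc, hqi⟩)
    · simpa using hf q i

theorem toDelta_applyRhs_congr {f : Q → ℕ → Tree (α ⊕ β)} {g : Q → ℕ → Tree (α ⊕ γ)}
    (hfg : ∀ q i, toDelta (f q i) = toDelta (g q i)) (t : Tree (α ⊕ Q × ℕ)) :
    toDelta (applyRhs f t) = toDelta (applyRhs g t) := by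
  induction t with
  | node a ts ih =>
    rcases a with d | ⟨q, i⟩
    · simp only [applyRhs_node_inl, toDelta_node_inl, List.map_map]
      exact congrArg (fun l => (List.mapM id l).map (node d)) (List.map_congr_left ih)
    · simpa using hfg q i

theorem applyRhs_node_inl_eq_iff {f : Q → ℕ → Tree (α ⊕ β)} {g : Q' → ℕ → Tree (α ⊕ β)}
    {d d' : α} {ts : List (Tree (α ⊕ Q × ℕ))} {ts' : List (Tree (α ⊕ Q' × ℕ))} :
    applyRhs f (.node (.inl d) ts) = applyRhs g (.node (.inl d') ts') ↔
      d = d' ∧ ts.length = ts'.length ∧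
        ∀ m (hm : m < ts.length) (hm' : m < ts'.length), applyRhs f ts[m] = applyRhs g ts'[m] := by
  simp [List.ext_getElem_iff]

end Substitution

section LeafVars

variable {α β Q : Type}

/-- `applyRhs` and `varList` ignore the children of variable nodes, so substitution instances only
determine trees in which these nodes are leaves. -/
inductive LeafVars : Tree (α ⊕ β) → Prop
  | inl (d : α) (ts : List (Tree (α ⊕ β))) : (∀ t ∈ ts, LeafVars t) → LeafVars (.node (.inl d) ts)
  | inr (x : β) : LeafVars (.node (.inr x) [])

theorem LeafVars.of_WF {rank : α → ℕ} {t : Tree (α ⊕ β)} (h : WF (rankV rank) t) :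
    LeafVars t := by
  induction t with
  | node a ts ih =>
    rw [WF_node_iff] at h
    rcases a with d | x
    · exact .inl d ts fun c hc => ih c hc (h.2 c hc)
    · rw [List.length_eq_zero_iff.mp h.1]
      exact .inr x

theorem leafVars_applyRhs {f : Q → ℕ → Tree (α ⊕ β)} (hf : ∀ q i, LeafVars (f q i))
    (t : Tree (α ⊕ Q × ℕ)) : LeafVars (applyRhs f t) := by
  induction t with
  | node a ts ih =>
    rcases a with d | ⟨q, i⟩
    · rw [applyRhs_node_inl]
      refine .inl d _ fun c hc => ?_
      obtain ⟨c', hc', rfl⟩ := List.mem_map.mp hc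
      exact ih c' hc'
    · simpa using hf q i

def renameVars (π : ℕ → ℕ) : Tree (α ⊕ Q × ℕ) → Tree (α ⊕ Q × ℕ) :=
  mapLabel (Sum.map id (Prod.map id π))

@[simp] theorem renameVars_node (π : ℕ → ℕ) (a : α ⊕ Q × ℕ) (ts) :
    renameVars π (.node a ts) = .node (Sum.map id (Prod.map id π) a) (ts.map (renameVars π)) :=
  mapLabel_node _ _ _

theorem renameVars_renameVars (π π' : ℕ → ℕ) (t : Tree (α ⊕ Q × ℕ)) :
    renameVars π' (renameVars π t) = renameVars (π' ∘ π) t := by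
  rw [renameVars, renameVars, mapLabel_mapLabel, Sum.map_comp_map, Prod.map_comp_map]
  rfl

theorem varList_renameVars (π : ℕ → ℕ) (t : Tree (α ⊕ Q × ℕ)) :
    varList (renameVars π t) = (varList t).map (Prod.map id π) :=
  varList_mapLabel _ _ t

theorem LeafVars.renameVars_eq_self {t : Tree (α ⊕ Q × ℕ)} (ht : LeafVars t) {π : ℕ → ℕ}
    (hπ : ∀ x ∈ varList t, π x.2 = x.2) : renameVars π t = t := by
  induction ht with
  | inl d ts _ ih =>
    rw [renameVars_node]
    refine congrArg _ ((List.map_congr_left fun c hc => ih c hc fun x hx => hπ x ?_).trans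
      (List.map_id ts))
    simpa using ⟨c, hc, hx⟩
  | inr x =>
    obtain ⟨q, i⟩ := x
    simp [hπ (q, i) (by simp)]

theorem simeq_renameVars_const {t : Tree (α ⊕ Q × ℕ)} (hN : LeafVars t) (ht : VarsLt 1 t)
    (j : ℕ) : Simeq (renameVars (fun _ => j) t) t := by
  have h0 : ∀ x ∈ varList t, x.2 = 0 := fun x hx => Nat.lt_one_iff.mp (ht x hx)
  have hvars : (varList (renameVars (fun _ => j) t)).map Prod.snd = (varList t).map fun _ => j := by
    rw [varList_renameVars, List.map_map]; rfl
  have hback : t = renameVars (fun _ => 0) (renameVars (fun _ => j) t) := by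
    rw [renameVars_renameVars]
    exact (hN.renameVars_eq_self fun x hx => (h0 x hx).symm).symm
  refine ⟨fun _ => 0, ⟨?_, ?_, ?_⟩, hback⟩ <;> simp only [hvars, Set.MapsTo, Set.InjOn,
    Set.SurjOn, Set.subset_def, Set.mem_image, Set.mem_ofPred_eq, List.mem_map]
  · rintro _ ⟨w, hw, -⟩
    exact ⟨w, hw, h0 w hw⟩
  · rintro _ ⟨-, -, rfl⟩ _ ⟨-, -, rfl⟩ -
    rfl
  · rintro _ ⟨w, hw, rfl⟩
    exact ⟨j, ⟨w, hw, rfl⟩, (h0 w hw).symm⟩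

end LeafVars

namespace TDTT

variable {Q Sig Δ : Type} {rankS : Sig → ℕ} {rankD : Δ → ℕ} (T : TDTT Q Sig Δ rankS rankD)

@[simp] theorem semState_node_inr (q : Q) (x : ℕ) (ts) :
    T.semState q (.node (.inr x) ts) = .node (.inr (q, x)) [] := by
  rw [semState]

theorem semState_node_inl {q : Q} {a : Sig} {ss : List (Tree (Sig ⊕ ℕ))}
    {σ : ℕ → Tree (Sig ⊕ ℕ)} (hσ : ∀ q' i, (q', i) ∈ varList (T.rhs q a) → ss[i]? = some (σ i)) :
    T.semState q (.node (.inl a) ss) = applyRhs (fun q' i => T.semState q' (σ i)) (T.rhs q a) := by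
  rw [semState]
  refine applyRhs_congr fun q' i hi => ?_
  have := hσ q' i hi
  split <;> simp_all

theorem semState_node_range (q : Q) (a : Sig) (σ : ℕ → Tree (Sig ⊕ ℕ)) :
    T.semState q (.node (.inl a) ((List.range (rankS a)).map σ))
      = applyRhs (fun q' i => T.semState q' (σ i)) (T.rhs q a) :=
  T.semState_node_inl fun q' i hi => by
    rw [List.getElem?_map, List.getElem?_range ((T.rhs_wf q a).2 _ hi), Option.map_some]

theorem semState_inputAtom (q : Q) (a : Sig) :
    T.semState q (inputAtom rankS a)
      = applyRhs (fun q' i => .node (.inr (q', i)) []) (T.rhs q a) := by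
  simp [inputAtom, semState_node_range]

theorem run_node_range (a : Sig) (σ : ℕ → Tree (Sig ⊕ ℕ)) :
    T.run (.node (.inl a) ((List.range (rankS a)).map σ))
      = applyRhs (fun q i => T.semState q (σ i)) (T.run (inputAtom rankS a)) := by
  simp only [run, applyRhs_applyRhs, semState_inputAtom, applyRhs_node_inr, semState_node_range]

theorem leafVars_run_inputAtom (a : Sig) : LeafVars (T.run (inputAtom rankS a)) := by
  refine leafVars_applyRhs (fun q _ => ?_) _
  rw [semState_inputAtom]
  exact leafVars_applyRhs (fun q' i => .inr _) _

theorem groundT_semState_embed {s : Tree Sig} (hs : WF rankS s) (q : Q) :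
    GroundT (T.semState q (embed s)) := by
  induction s generalizing q with
  | node a ts ih =>
    obtain ⟨hlen, hts⟩ := WF_node_iff.mp hs
    rw [embed_node, T.semState_node_inl (σ := fun i => embed (ts.getD i (.node a ts))) ?_]
    · refine groundT_applyRhs fun q' i hi => ?_
      have hi : i < ts.length := hlen ▸ (T.rhs_wf q a).2 _ hi
      rw [List.getD_eq_getElem _ _ hi]
      exact ih _ (List.getElem_mem hi) (hts _ (List.getElem_mem hi)) q'
    · intro q' i hi
      have hi : i < ts.length := hlen ▸ (T.rhs_wf q a).2 _ hi
      rw [List.getElem?_map, List.getElem?_eq_getElem hi, List.getD_eq_getElem _ _ hi]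
      rfl

theorem groundT_run_embed {s : Tree Sig} (hs : WF rankS s) : GroundT (T.run (embed s)) :=
  groundT_applyRhs fun q _ _ => T.groundT_semState_embed hs q

theorem IsHom.semState_eq_run {h : TDTT Unit Sig Δ rankS rankD} (hHom : h.IsHom) (q : Unit)
    (s : Tree (Sig ⊕ ℕ)) : h.semState q s = h.run s := by
  rw [run, hHom, applyRhs_node_inr]

/-- `t[q(xᵢ) ← [[q]](σ i)]` for ground inputs `σ i`. -/
def inst (σ : ℕ → Tree Sig) : Tree (Δ ⊕ Q × ℕ) → Tree (Δ ⊕ Q × ℕ) :=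
  applyRhs fun q i => T.semState q (embed (σ i))

variable {T}

theorem Earliest.exists_label_ne (hE : T.Earliest) (q : Q) (ℓ : Δ ⊕ Q × ℕ) :
    ∃ s, WF rankS s ∧ (T.semState q (embed s)).label ≠ ℓ := by
  obtain ⟨s₁, s₂, hs₁, hs₂, hne⟩ := hE q
  by_cases h₁ : (T.semState q (embed s₁)).label = ℓ
  · exact ⟨s₂, hs₂, fun h₂ => hne (h₁.trans h₂.symm)⟩
  · exact ⟨s₁, hs₁, h₁⟩

theorem CanonicalEarliest.eq_of_forall_semState_eq (hCE : T.CanonicalEarliest) {s₀ : Tree Sig}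
    (hs₀ : WF rankS s₀) {q q' : Q} {i j : ℕ}
    (h : ∀ σ : ℕ → Tree Sig, (∀ i, WF rankS (σ i)) →
      T.semState q (embed (σ i)) = T.semState q' (embed (σ j))) : q = q' ∧ i = j := by
  classical
  have hij : i = j := by
    by_contra hij
    -- varying only input `j` would change the root of the right-hand side but not the left
    obtain ⟨s, hs, hne⟩ := hCE.1.exists_label_ne q' (T.semState q (embed s₀)).label
    have := h (Function.update (fun _ => s₀) j s)
      ((Function.forall_update_iff _ fun _ s => WF rankS s).mpr ⟨hs, fun _ _ => hs₀⟩)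
    rw [Function.update_of_ne hij, Function.update_self] at this
    exact hne (congrArg label this).symm
  subst hij
  refine ⟨by_contra fun hq => ?_, rfl⟩
  obtain ⟨s, hs, hne⟩ := hCE.2 q q' hq
  exact hne (h (fun _ => s) fun _ => hs)

theorem CanonicalEarliest.eq_renameVars_of_forall_inst_eq (hCE : T.CanonicalEarliest)
    {s₀ : Tree Sig} (hs₀ : WF rankS s₀) {t : Tree (Δ ⊕ Q × ℕ)} (ht : LeafVars t)
    {u : Tree (Δ ⊕ Q × ℕ)} (hu : LeafVars u) (π : ℕ → ℕ)
    (h : ∀ σ : ℕ → Tree Sig, (∀ i, WF rankS (σ i)) → T.inst σ u = T.inst (σ ∘ π) t) :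
    u = renameVars π t := by
  induction ht generalizing u with
  | inl d ts _ ih =>
    rcases hu with ⟨d', us, hus⟩ | ⟨⟨q, i⟩⟩
    · obtain ⟨rfl, hlen, -⟩ := applyRhs_node_inl_eq_iff.mp (h (fun _ => s₀) fun _ => hs₀)
      rw [renameVars_node, Sum.map_inl, id]
      refine congrArg _ (List.ext_getElem (by simpa using hlen) fun m hm hm' => ?_)
      rw [List.getElem_map]
      refine ih _ (List.getElem_mem _) (hus _ (List.getElem_mem _)) fun σ hσ => ?_
      exact (applyRhs_node_inl_eq_iff.mp (h σ hσ)).2.2 m hm (hlen ▸ hm)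
    · obtain ⟨s, hs, hne⟩ := hCE.1.exists_label_ne q (.inl d)
      have := congrArg label (h (fun _ => s) fun _ => hs)
      exact (hne (by simpa [inst] using this)).elim
  | inr x =>
    obtain ⟨q, i⟩ := x
    rcases hu with ⟨d', us, -⟩ | ⟨⟨q', i'⟩⟩
    · obtain ⟨s, hs, hne⟩ := hCE.1.exists_label_ne q (.inl d')
      have := congrArg label (h (fun _ => s) fun _ => hs)
      exact (hne (by simpa [inst] using this.symm)).elim
    · obtain ⟨rfl, rfl⟩ := hCE.eq_of_forall_semState_eq hs₀ fun σ hσ => by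
        simpa [inst] using h σ hσ
      simp

theorem inst_run_inputAtom {h : TDTT Unit Sig Δ rankS rankD} (hHom : h.IsHom) (hEq : T.Equiv h)
    (a : Sig) {σ : ℕ → Tree Sig} (hσ : ∀ i, WF rankS (σ i)) :
    T.inst σ (T.run (inputAtom rankS a))
      = applyRhs (fun _ i => T.run (embed (σ i))) (h.run (inputAtom rankS a)) := by
  set s : Tree Sig := .node a ((List.range (rankS a)).map σ)
  have hs : WF rankS s := WF_node_iff.mpr ⟨by simp, by simpa using fun i _ => hσ i⟩
  have hembed : (embed s : Tree (Sig ⊕ ℕ))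
      = .node (.inl a) ((List.range (rankS a)).map fun i => embed (σ i)) := by
    rw [embed_node, List.map_map]; rfl
  have hT : T.inst σ (T.run (inputAtom rankS a)) = T.run (embed s) := by
    rw [hembed, run_node_range]; rfl
  have hh : h.run (embed s)
      = applyRhs (fun _ i => h.run (embed (σ i))) (h.run (inputAtom rankS a)) := by
    rw [hembed, run_node_range]; simp only [hHom.semState_eq_run]
  rw [hT]
  refine GroundT.eq_of_toDelta_eq (T.groundT_run_embed hs)
    (groundT_applyRhs fun _ i _ => T.groundT_run_embed (hσ i)) ?_
  rw [hEq s hs, hh]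
  exact toDelta_applyRhs_congr (fun _ i => (hEq (σ i) (hσ i)).symm) _

theorem CanonicalEarliest.subtreeConform_of_forall_inst_eq {P : Type}
    (hCE : T.CanonicalEarliest) {s₀ : Tree Sig} (hs₀ : WF rankS s₀) (r : Tree (Δ ⊕ P × ℕ))
    {t : Tree (Δ ⊕ Q × ℕ)} (ht : LeafVars t)
    (h : ∀ σ : ℕ → Tree Sig, (∀ i, WF rankS (σ i)) →
      T.inst σ t = applyRhs (fun _ i => T.run (embed (σ i))) r) :
    SubtreeConform T.axm t := by
  induction r generalizing t with
  | node a rs ih =>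
    rcases a with d | ⟨p, j⟩
    · rcases ht with ⟨d', ts, hts⟩ | ⟨⟨q, i⟩⟩
      · obtain ⟨-, hlen, -⟩ := applyRhs_node_inl_eq_iff.mp (h (fun _ => s₀) fun _ => hs₀)
        refine .comp d' ts fun c hc => ?_
        obtain ⟨m, hm, rfl⟩ := List.getElem_of_mem hc
        exact ih _ (List.getElem_mem (hlen ▸ hm)) (hts _ hc) fun σ hσ =>
          (applyRhs_node_inl_eq_iff.mp (h σ hσ)).2.2 m hm (hlen ▸ hm)
      · obtain ⟨s, hs, hne⟩ := hCE.1.exists_label_ne q (.inl d)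
        have := congrArg label (h (fun _ => s) fun _ => hs)
        exact (hne (by simpa [inst] using this)).elim
    · have hA : LeafVars T.axm := .of_WF T.axm_wf.1
      have hren := hCE.eq_renameVars_of_forall_inst_eq hs₀ hA ht (fun _ => j) fun σ hσ => by
        rw [h σ hσ, applyRhs_node_inr]; rfl
      exact .simeq t (hren ▸ simeq_renameVars_const hA T.axm_wf.2 j)

end TDTT

/-- If a canonical earliest transducer `T` with axiom `A` is
equivalent to a homomorphism, then `T(a(x₁,…,x_k))` is subtree conform to `A`
for every `a ∈ Σ`. -/
theorem subtree_conform_of_hom {Q Sig Δ : Type} [Fintype Q] [Fintype Sig] [Fintype Δ]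
    {rankS : Sig → ℕ} {rankD : Δ → ℕ}
    (T : TDTT Q Sig Δ rankS rankD) (hCE : T.CanonicalEarliest)
    (h : TDTT Unit Sig Δ rankS rankD) (hHom : h.IsHom) (hEq : T.Equiv h) :
    ∀ a : Sig, SubtreeConform T.axm (T.run (inputAtom rankS a)) := by
  intro a
  by_cases hground : GroundT (T.run (inputAtom rankS a))
  · exact .ground _ hground
  obtain ⟨⟨q, _⟩, -⟩ := List.exists_mem_of_ne_nil _ hground
  obtain ⟨s₀, -, hs₀, -, -⟩ := hCE.1 q
  exact hCE.subtreeConform_of_forall_inst_eq hs₀ _ (T.leafVars_run_inputAtom a)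
    fun σ hσ => TDTT.inst_run_inputAtom hHom hEq a hσ

end TreeTrans
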